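/- arXiv:1107.1436 — 6 statements merged into one kernel-verified Lean document; each statement's English description precedes it below -/
import Mathlib

section
/- Let m ≥ 2 and let 𝒫 be an (m+1)-pattern. If there exists an m-stable m-pattern 𝒬 such that 𝒫_γ = 𝒬 for every γ ∈ Π(m+1,m), then 𝒫 is (m+1)-stable. -/
open Finset

/-- `vec m` is the set `{1, …, m}`. -/
def vec (m : ℕ) : Finset ℕ := Finset.Icc 1 m

/-- `IsNOP s k C` : `C 1, …, C k` form a naturally ordered partition of `{1, …, s}`
into `k` nonempty sets. -/
def IsNOP (s k : ℕ) (C : ℕ → Finset ℕ) : Prop :=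
  (∀ i ∈ Finset.Icc 1 k, (C i).Nonempty) ∧
  (∀ i ∈ Finset.Icc 1 k, ∀ j ∈ Finset.Icc 1 k, i ≠ j → Disjoint (C i) (C j)) ∧
  (Finset.Icc 1 k).biUnion C = Finset.Icc 1 s ∧
  (∀ i ∈ Finset.Icc 1 k, ∀ j ∈ Finset.Icc 1 k, i < j → (C i).min < (C j).min)

/-- The induced subset `P_γ`. -/
def indSet (C : ℕ → Finset ℕ) (k : ℕ) (P : Finset ℕ) : Finset ℕ :=
  (Finset.Icc 1 k).filter fun j => ((C j) ∩ P).Nonempty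

/-- The induced pattern `𝒫_γ`. -/
def indPat (C : ℕ → Finset ℕ) (k : ℕ) (P : Set (Finset ℕ)) : Set (Finset ℕ) :=
  indSet C k '' P

/-- An `m`-pattern: a nonempty collection of nonempty subsets of `{1, …, m}`. -/
def IsPattern (m : ℕ) (P : Set (Finset ℕ)) : Prop :=
  P.Nonempty ∧ ∀ Q ∈ P, Finset.Nonempty Q ∧ Q ⊆ vec m

/-- `k`-stability of an `m`-pattern. -/
def IsStable (m k : ℕ) (P : Set (Finset ℕ)) : Prop :=
  ∀ k', 2 ≤ k' → k' ≤ k → ∀ α β : ℕ → Finset ℕ,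
    IsNOP m k' α → IsNOP m k' β → indPat α k' P = indPat β k' P

/-- `φ_m = {{1},{1,2},…,{1,…,m}}`. -/
def phiPat (m : ℕ) : Set (Finset ℕ) :=
  { S | ∃ l, 1 ≤ l ∧ l ≤ m ∧ S = Finset.Icc 1 l }

/-- `A_{j,m}`: nonempty subsets of `{1,…,m}` of cardinality at most `j`. -/
def APat (j m : ℕ) : Set (Finset ℕ) :=
  { S | S.Nonempty ∧ S ⊆ vec m ∧ S.card ≤ j }

/-- `A¹_{j,m}`: subsets of `{1,…,m}` of cardinality at most `j` containing `1`. -/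
def A1Pat (j m : ℕ) : Set (Finset ℕ) :=
  { S | 1 ∈ S ∧ S ⊆ vec m ∧ S.card ≤ j }

/-- `H^m_{h,l}`: complements in `{1,…,m}` of a set of `h` holes, all lying in `[l,m]`. -/
def HPat (m h l : ℕ) : Set (Finset ℕ) :=
  { S | ∃ D : Finset ℕ, D.card = h ∧ D ⊆ Finset.Icc l m ∧ S = vec m \ D }

/-- `EH^m_{h,l}`: complements in `{1,…,m}` of a set of `h` holes, all in `[l,m]`,
whose first hole equals `l`. -/
def EHPat (m h l : ℕ) : Set (Finset ℕ) :=
  { S | ∃ D : Finset ℕ, D.card = h ∧ D ⊆ Finset.Icc l m ∧ l ∈ D ∧ S = vec m \ D }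

/-- `D^m_{r,s} = A¹_{m-r-1,m} ∪ ⋃_{h=1}^{r} H^m_{h,s-h+1} ∪ {m⃗}`. -/
def DPat (m r s : ℕ) : Set (Finset ℕ) :=
  A1Pat (m - r - 1) m ∪ (⋃ h ∈ Finset.Icc 1 r, HPat m h (s - h + 1)) ∪ {vec m}

/-- `γ_{i,j} ∈ Π(m+1,m)` (for `1 ≤ i < j ≤ m+1`): the naturally ordered partition of
`{1,…,m+1}` into `m` blocks, namely `{i,j}` together with the singletons of the
remaining points. -/
def gammaIJ (i j : ℕ) : ℕ → Finset ℕ :=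
  fun t => if t = i then {i, j} else if t < j then {t} else {t + 1}

/-- A hereditary `m`-stable `m`-pattern. -/
def IsHSP (m : ℕ) (P : Set (Finset ℕ)) : Prop :=
  IsPattern m P ∧ IsStable m m P ∧
  ∀ m', m < m' → ∃ Q : Set (Finset ℕ), IsPattern m' Q ∧ IsStable m' m' Q ∧
    ∀ γ : ℕ → Finset ℕ, IsNOP m' m γ → indPat γ m Q = P

/-- Unique stable lifts. -/
def HasUSL (m : ℕ) (P : Set (Finset ℕ)) : Prop :=
  ∀ m', m < m' → ∃! Q : Set (Finset ℕ),
    IsPattern m' Q ∧ IsStable m' m' Q ∧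
    ∀ γ : ℕ → Finset ℕ, IsNOP m' m γ → indPat γ m Q = P

/-
Every naturally ordered partition `α` of `{1, …, m+1}` into `k ≤ m` blocks has two points
`i < j` in one block, so it factors as `δ ∘ γ`: first `γ ∈ Π(m+1, m)` merges `j` into `i`
(the fibres of `mergeMap i j`), then some `δ ∈ Π(m, k)` groups the resulting `m` points. Induced
patterns compose, so `𝒫_α = (𝒫_γ)_δ = 𝒬_δ`, which does not depend on `α` by the stability of
`𝒬`. For `k = m + 1` the only partition is into singletons, which induces `𝒫` itself.
-/

lemma min_lt_min_of_exists_forall_lt {A B : Finset ℕ} (hB : B.Nonempty)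
    (h : ∃ a ∈ A, ∀ b ∈ B, a < b) : A.min < B.min := by
  obtain ⟨a, ha, hab⟩ := h
  rw [← coe_min' hB]
  exact (min_le ha).trans_lt (WithTop.coe_lt_coe.2 (hab _ (min'_mem B hB)))

lemma eq_self_of_strictMonoOn_Icc {f : ℕ → ℕ} {s : ℕ} (hf : StrictMonoOn f (Icc 1 s : Set ℕ))
    (hmaps : ∀ x ∈ Icc 1 s, f x ∈ Icc 1 s) {x : ℕ} (hx : x ∈ Icc 1 s) : f x = x := by
  have hcard : ∀ {a b c d : ℕ}, Icc a b ⊆ Icc 1 s → (∀ y ∈ Icc a b, f y ∈ Icc c d) →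
      #(Icc a b) ≤ #(Icc c d) := fun hsub hmaps' =>
    card_le_card_of_injOn f hmaps' (hf.injOn.mono (coe_subset.2 hsub))
  have hmono : ∀ {y z : ℕ}, y ∈ Icc 1 s → z ∈ Icc 1 s → y ≤ z → f y ≤ f z := fun hy hz hyz =>
    hf.monotoneOn (mem_coe.2 hy) (mem_coe.2 hz) hyz
  have hx' := mem_Icc.1 hx
  have hfx := mem_Icc.1 (hmaps x hx)
  have hle : #(Icc 1 x) ≤ #(Icc 1 (f x)) := by
    have hsub : Icc 1 x ⊆ Icc 1 s := Icc_subset_Icc le_rfl hx'.2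
    exact hcard hsub fun y hy =>
      mem_Icc.2 ⟨(mem_Icc.1 (hmaps y (hsub hy))).1, hmono (hsub hy) hx (mem_Icc.1 hy).2⟩
  have hge : #(Icc x s) ≤ #(Icc (f x) s) := by
    have hsub : Icc x s ⊆ Icc 1 s := Icc_subset_Icc hx'.1 le_rfl
    exact hcard hsub fun y hy =>
      mem_Icc.2 ⟨hmono hx (hsub hy) (mem_Icc.1 hy).1, (mem_Icc.1 (hmaps y (hsub hy))).2⟩
  simp only [Nat.card_Icc] at hle hge
  omega

section Fibers

variable {s k : ℕ}

def fibers (s : ℕ) (g : ℕ → ℕ) (r : ℕ) : Finset ℕ :=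
  (Icc 1 s).filter (g · = r)

lemma mem_fibers {g : ℕ → ℕ} {r x : ℕ} : x ∈ fibers s g r ↔ x ∈ Icc 1 s ∧ g x = r :=
  mem_filter

lemma indSet_eq_image {γ : ℕ → Finset ℕ} {g : ℕ → ℕ} (hg : ∀ x ∈ Icc 1 s, g x ∈ Icc 1 k)
    (hγ : ∀ x ∈ Icc 1 s, ∀ r ∈ Icc 1 k, x ∈ γ r ↔ g x = r) {S : Finset ℕ} (hS : S ⊆ Icc 1 s) :
    indSet γ k S = S.image g := by
  ext r
  simp only [indSet, mem_filter, mem_image, Finset.Nonempty, mem_inter]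
  constructor
  · rintro ⟨hr, x, hxγ, hxS⟩
    exact ⟨x, hxS, (hγ x (hS hxS) r hr).1 hxγ⟩
  · rintro ⟨x, hxS, rfl⟩
    exact ⟨hg x (hS hxS), x, (hγ x (hS hxS) _ (hg x (hS hxS))).2 rfl, hxS⟩

lemma indSet_fibers {g : ℕ → ℕ} (hg : ∀ x ∈ Icc 1 s, g x ∈ Icc 1 k) {S : Finset ℕ}
    (hS : S ⊆ Icc 1 s) : indSet (fibers s g) k S = S.image g :=
  indSet_eq_image hg (fun x hx _ _ => by simp only [mem_fibers, hx, true_and]) hS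

lemma isNOP_fibers {g : ℕ → ℕ} (hg : ∀ x ∈ Icc 1 s, g x ∈ Icc 1 k)
    (hsurj : ∀ r ∈ Icc 1 k, ∃ x ∈ Icc 1 s, g x = r)
    (hord : ∀ r ∈ Icc 1 k, ∀ r' ∈ Icc 1 k, r < r' →
      ∃ x ∈ Icc 1 s, g x = r ∧ ∀ y ∈ Icc 1 s, g y = r' → x < y) :
    IsNOP s k (fibers s g) := by
  have hne : ∀ r ∈ Icc 1 k, (fibers s g r).Nonempty := fun r hr => by
    obtain ⟨x, hx, hgx⟩ := hsurj r hr
    exact ⟨x, mem_fibers.2 ⟨hx, hgx⟩⟩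
  refine ⟨hne, fun r _ r' _ hrr' => disjoint_left.2 fun x hx hx' => ?_, ?_,
    fun r hr r' hr' hlt => ?_⟩
  · exact hrr' ((mem_fibers.1 hx).2.symm.trans (mem_fibers.1 hx').2)
  · ext x
    simp only [mem_biUnion, mem_fibers]
    exact ⟨fun ⟨_, _, hx, _⟩ => hx, fun hx => ⟨g x, hg x hx, hx, rfl⟩⟩
  · obtain ⟨x, hx, hgx, hlt⟩ := hord r hr r' hr' hlt
    exact min_lt_min_of_exists_forall_lt (hne r' hr')
      ⟨x, mem_fibers.2 ⟨hx, hgx⟩, fun y hy => hlt y (mem_fibers.1 hy).1 (mem_fibers.1 hy).2⟩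

end Fibers

namespace IsNOP

variable {s k : ℕ} {α : ℕ → Finset ℕ}

lemma subset_Icc (hα : IsNOP s k α) {r : ℕ} (hr : r ∈ Icc 1 k) : α r ⊆ Icc 1 s :=
  hα.2.2.1 ▸ subset_biUnion_of_mem α hr

lemma eq_of_mem (hα : IsNOP s k α) {r r' x : ℕ} (hr : r ∈ Icc 1 k) (hr' : r' ∈ Icc 1 k)
    (hx : x ∈ α r) (hx' : x ∈ α r') : r = r' := by
  by_contra hne
  exact disjoint_left.1 (hα.2.1 r hr r' hr' hne) hx hx'

lemma min'_lt_min' (hα : IsNOP s k α) {r r' : ℕ} (hr : r ∈ Icc 1 k) (hr' : r' ∈ Icc 1 k)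
    (hlt : r < r') : (α r).min' (hα.1 r hr) < (α r').min' (hα.1 r' hr') := by
  have := hα.2.2.2 r hr r' hr' hlt
  rwa [← coe_min' (hα.1 r hr), ← coe_min' (hα.1 r' hr'), WithTop.coe_lt_coe] at this

lemma exists_blockMap (hα : IsNOP s k α) : ∃ b : ℕ → ℕ, (∀ x ∈ Icc 1 s, b x ∈ Icc 1 k) ∧
    ∀ x ∈ Icc 1 s, ∀ r ∈ Icc 1 k, x ∈ α r ↔ b x = r := by
  choose! b hb using fun x (hx : x ∈ Icc 1 s) => mem_biUnion.1 (hα.2.2.1 ▸ hx)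
  refine ⟨b, fun x hx => (hb x hx).1, fun x hx r hr => ⟨fun hxr => ?_, ?_⟩⟩
  · exact hα.eq_of_mem (hb x hx).1 hr (hb x hx).2 hxr
  · rintro rfl
    exact (hb x hx).2

lemma eq_singleton (hα : IsNOP s s α) {r : ℕ} (hr : r ∈ Icc 1 s) : α r = {r} := by
  set μ : ℕ → ℕ := fun r => if h : (α r).Nonempty then (α r).min' h else 0
  have hμ : ∀ r (hr : r ∈ Icc 1 s), μ r = (α r).min' (hα.1 r hr) := fun r hr => dif_pos _
  have hμ_id : ∀ r ∈ Icc 1 s, μ r = r := by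
    refine fun r hr => eq_self_of_strictMonoOn_Icc (fun a ha b hb hab => ?_) (fun a ha => ?_) hr
    · rw [hμ a (mem_coe.1 ha), hμ b (mem_coe.1 hb)]
      exact hα.min'_lt_min' (mem_coe.1 ha) (mem_coe.1 hb) hab
    · exact hμ a ha ▸ hα.subset_Icc ha (min'_mem _ _)
  have hmem : ∀ r ∈ Icc 1 s, r ∈ α r := fun r hr => by
    have := min'_mem (α r) (hα.1 r hr)
    rwa [← hμ r hr, hμ_id r hr] at this
  refine eq_singleton_iff_unique_mem.2 ⟨hmem r hr, fun x hx => ?_⟩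
  have hxs := hα.subset_Icc hr hx
  exact (hα.eq_of_mem hr hxs hx (hmem x hxs)).symm

lemma indSet_eq_self (hα : IsNOP s s α) {S : Finset ℕ} (hS : S ⊆ Icc 1 s) :
    indSet α s S = S := by
  rw [indSet_eq_image (g := id) (fun x hx => hx) (fun x _ r hr => ?_) hS, image_id]
  rw [hα.eq_singleton hr, mem_singleton, id]

end IsNOP

section MergeMap

variable {i j : ℕ}

def mergeMap (i j x : ℕ) : ℕ :=
  if x = j then i else if x < j then x else x - 1

def skipMap (j v : ℕ) : ℕ :=
  if v < j then v else v + 1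

lemma mergeMap_skipMap (v : ℕ) : mergeMap i j (skipMap j v) = v := by
  unfold mergeMap skipMap
  split_ifs <;> omega

lemma skipMap_mergeMap {x : ℕ} (hx : x ≠ j) : skipMap j (mergeMap i j x) = x := by
  unfold mergeMap skipMap
  split_ifs <;> omega

lemma skipMap_ne (v : ℕ) : skipMap j v ≠ j := by
  unfold skipMap
  split_ifs <;> omega

lemma skipMap_mem_Icc {m v : ℕ} (hv : v ∈ Icc 1 m) : skipMap j v ∈ Icc 1 (m + 1) := by
  rw [mem_Icc] at hv ⊢
  unfold skipMap
  split_ifs <;> omega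

lemma mergeMap_mem_Icc {m x : ℕ} (hi : 1 ≤ i) (hij : i < j) (hj : j ≤ m + 1)
    (hx : x ∈ Icc 1 (m + 1)) : mergeMap i j x ∈ Icc 1 m := by
  rw [mem_Icc] at hx ⊢
  unfold mergeMap
  split_ifs <;> omega

lemma mergeMap_lt_mergeMap (hij : i < j) {x y : ℕ} (hxy : x < y) (hy : y ≠ j) :
    mergeMap i j x < mergeMap i j y := by
  unfold mergeMap
  split_ifs <;> omega

lemma skipMap_mergeMap_eq_of_eq {b : ℕ → ℕ} (hij : i < j) (hbij : b i = b j) (x : ℕ) :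
    b (skipMap j (mergeMap i j x)) = b x := by
  by_cases hx : x = j
  · subst hx
    rw [mergeMap, if_pos rfl, skipMap, if_pos hij, hbij]
  · rw [skipMap_mergeMap hx]

lemma isNOP_fibers_mergeMap {m : ℕ} (hi : 1 ≤ i) (hij : i < j) (hj : j ≤ m + 1) :
    IsNOP (m + 1) m (fibers (m + 1) (mergeMap i j)) :=
  isNOP_fibers (fun _ hx => mergeMap_mem_Icc hi hij hj hx)
    (fun r hr => ⟨skipMap j r, skipMap_mem_Icc hr, mergeMap_skipMap r⟩)
    fun r hr _ _ hlt => ⟨skipMap j r, skipMap_mem_Icc hr, mergeMap_skipMap r, fun y _ hy => by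
      subst hy
      unfold mergeMap skipMap at *
      split_ifs at * <;> omega⟩

lemma IsNOP.isNOP_fibers_comp_skipMap {m k : ℕ} {α : ℕ → Finset ℕ} (hα : IsNOP (m + 1) k α)
    {b : ℕ → ℕ} (hb : ∀ x ∈ Icc 1 (m + 1), b x ∈ Icc 1 k)
    (hbα : ∀ x ∈ Icc 1 (m + 1), ∀ r ∈ Icc 1 k, x ∈ α r ↔ b x = r)
    (hi : 1 ≤ i) (hij : i < j) (hj : j ≤ m + 1) (hbij : b i = b j) :
    IsNOP m k (fibers m (b ∘ skipMap j)) := by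
  refine isNOP_fibers (fun v hv => hb _ (skipMap_mem_Icc hv)) (fun r hr => ?_)
    fun r hr r' hr' hlt => ?_
  · obtain ⟨x, hx⟩ := hα.1 r hr
    have hxI := hα.subset_Icc hr hx
    exact ⟨mergeMap i j x, mergeMap_mem_Icc hi hij hj hxI,
      (skipMap_mergeMap_eq_of_eq hij hbij x).trans ((hbα x hxI r hr).1 hx)⟩
  · set a := (α r).min' (hα.1 r hr)
    have ha : a ∈ α r := min'_mem _ _
    have haI := hα.subset_Icc hr ha
    -- `j` is never the least element of its block, since `i < j` lies in the same block
    have haj : a ≠ j := by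
      rintro rfl
      have hiα : i ∈ α r :=
        (hbα i (mem_Icc.2 ⟨hi, by omega⟩) r hr).2 (hbij.trans ((hbα a haI r hr).1 ha))
      exact absurd (min'_le _ _ hiα) (not_le.2 hij)
    refine ⟨mergeMap i j a, mergeMap_mem_Icc hi hij hj haI, ?_, fun y hy hby => ?_⟩
    · rw [Function.comp_apply, skipMap_mergeMap haj, ← hbα a haI r hr]
      exact ha
    · have hyα : skipMap j y ∈ α r' := (hbα _ (skipMap_mem_Icc hy) r' hr').2 hby
      calc mergeMap i j a < mergeMap i j (skipMap j y) :=
            mergeMap_lt_mergeMap hij ((hα.min'_lt_min' hr hr' hlt).trans_le (min'_le _ _ hyα))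
              (skipMap_ne y)
        _ = y := mergeMap_skipMap y

end MergeMap

lemma IsNOP.exists_factor {m k : ℕ} {α : ℕ → Finset ℕ} (hα : IsNOP (m + 1) k α) (hk : k ≤ m) :
    ∃ γ δ : ℕ → Finset ℕ, IsNOP (m + 1) m γ ∧ IsNOP m k δ ∧
      ∀ S ⊆ Icc 1 (m + 1), indSet δ k (indSet γ m S) = indSet α k S := by
  obtain ⟨b, hb, hbα⟩ := hα.exists_blockMap
  obtain ⟨i, hi, j, hj, hij, hbij⟩ :
      ∃ i ∈ Icc 1 (m + 1), ∃ j ∈ Icc 1 (m + 1), i < j ∧ b i = b j := by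
    obtain ⟨x, hx, y, hy, hne, hxy⟩ :=
      exists_ne_map_eq_of_card_lt_of_maps_to (by simp only [Nat.card_Icc]; omega) hb
    rcases hne.lt_or_gt with h | h
    exacts [⟨x, hx, y, hy, h, hxy⟩, ⟨y, hy, x, hx, h, hxy.symm⟩]
  have hi1 : 1 ≤ i := (mem_Icc.1 hi).1
  have hjm : j ≤ m + 1 := (mem_Icc.1 hj).2
  refine ⟨_, _, isNOP_fibers_mergeMap hi1 hij hjm,
    hα.isNOP_fibers_comp_skipMap hb hbα hi1 hij hjm hbij, fun S hS => ?_⟩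
  have hmerge : ∀ x ∈ Icc 1 (m + 1), mergeMap i j x ∈ Icc 1 m :=
    fun _ hx => mergeMap_mem_Icc hi1 hij hjm hx
  rw [indSet_fibers hmerge hS,
    indSet_fibers (g := b ∘ skipMap j) (fun v hv => hb _ (skipMap_mem_Icc hv))
      (image_subset_iff.2 fun x hx => hmerge x (hS hx)),
    image_image, indSet_eq_image hb hbα hS]
  exact image_congr fun x _ => skipMap_mergeMap_eq_of_eq hij hbij x

theorem stmt0_general (m : ℕ) (P : Set (Finset ℕ)) (hP : IsPattern (m + 1) P)
    (h : ∃ Q : Set (Finset ℕ), IsPattern m Q ∧ IsStable m m Q ∧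
      ∀ γ : ℕ → Finset ℕ, IsNOP (m + 1) m γ → indPat γ m P = Q) :
    IsStable (m + 1) (m + 1) P := by
  obtain ⟨Q, -, hQ, hPQ⟩ := h
  have hPsub : ∀ S ∈ P, S ⊆ Icc 1 (m + 1) := fun S hS => (hP.2 S hS).2
  intro k hk2 hk α β hα hβ
  rcases hk.eq_or_lt with rfl | hlt
  · have hid : ∀ {α}, IsNOP (m + 1) (m + 1) α → indPat α (m + 1) P = P := fun hα =>
      (Set.image_congr fun S hS => hα.indSet_eq_self (hPsub S hS)).trans (Set.image_id P)
    rw [hid hα, hid hβ]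
  · have hfactor : ∀ {α}, IsNOP (m + 1) k α → ∃ δ, IsNOP m k δ ∧ indPat α k P = indPat δ k Q := by
      intro α hα
      obtain ⟨γ, δ, hγ, hδ, hcomp⟩ := hα.exists_factor (by omega)
      refine ⟨δ, hδ, ?_⟩
      rw [← hPQ γ hγ, indPat, indPat, indPat, Set.image_image]
      exact Set.image_congr fun S hS => (hcomp S (hPsub S hS)).symm
    obtain ⟨δα, hδα, hα'⟩ := hfactor hα
    obtain ⟨δβ, hδβ, hβ'⟩ := hfactor hβ
    rw [hα', hβ']
    exact hQ k hk2 (by omega) δα δβ hδα hδβ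

theorem stmt0 (m : ℕ) (hm : 2 ≤ m) (P : Set (Finset ℕ)) (hP : IsPattern (m + 1) P)
    (h : ∃ Q : Set (Finset ℕ), IsPattern m Q ∧ IsStable m m Q ∧
      ∀ γ : ℕ → Finset ℕ, IsNOP (m + 1) m γ → indPat γ m P = Q) :
    IsStable (m + 1) (m + 1) P :=
  stmt0_general m P hP h
end

section
/- Let 𝒫 be an (m+1)-stable (m+1)-pattern, let π = γ_{m,m+1} ∈ Π(m+1,m), and let j be an integer with 1 ≤ j < m. If A_{j,m} ⊆ 𝒫_π then A_{j,m+1} ⊆ 𝒫; likewise, if A¹_{j,m} ⊆ 𝒫_π then A¹_{j,m+1} ⊆ 𝒫. -/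
open Finset

/-
A set `S ∈ A_{j,m+1}` misses at least two points `p < q` of `{1, …, m+1}`, since
`|S| ≤ j < m`. By stability `𝒫_π = 𝒫_γ` for `γ = γ_{p,q}`, so the relabelled copy `S_γ` of `S`,
which lies in `A_{j,m}` (in `A¹_{j,m}` if `1 ∈ S`), is `T_γ` for some `T ∈ 𝒫`. As `S_γ` avoids the
block `{p, q}`, so does `T`, and off that block `γ` is a bijection onto singletons; hence `T = S`.
-/

lemma mem_gammaIJ {i j t x : ℕ} :
    x ∈ gammaIJ i j t ↔
      if t = i then x = i ∨ x = j else if t < j then x = t else x = t + 1 := by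
  unfold gammaIJ
  split_ifs <;> simp

lemma min_gammaIJ {i j : ℕ} (hij : i < j) (t : ℕ) :
    (gammaIJ i j t).min = ((if t < j then t else t + 1 : ℕ) : WithTop ℕ) := by
  unfold gammaIJ
  split_ifs with hti htj htj
  · subst hti
    rw [Finset.min_insert, Finset.min_singleton, ← WithTop.coe_min, Nat.min_eq_left hij.le]
    rfl
  · exact absurd hij (hti ▸ htj)
  · exact Finset.min_singleton
  · exact Finset.min_singleton

lemma gammaIJ_isNOP {i j m : ℕ} (hi : 1 ≤ i) (hij : i < j) (hjm : j ≤ m + 1) :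
    IsNOP (m + 1) m (gammaIJ i j) := by
  refine ⟨fun t _ => ⟨if t < j then t else t + 1, ?_⟩, ?_, ?_, ?_⟩
  · rw [mem_gammaIJ]
    split_ifs <;> omega
  · intro s hs t ht hst
    rw [Finset.disjoint_left]
    intro x hxs hxt
    rw [mem_gammaIJ] at hxs hxt
    simp only [Finset.mem_Icc] at hs ht
    split_ifs at hxs hxt <;> omega
  · ext x
    simp only [Finset.mem_biUnion, Finset.mem_Icc, mem_gammaIJ]
    constructor
    · rintro ⟨t, ht, hx⟩
      split_ifs at hx <;> omega
    · intro hx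
      by_cases hxij : x = i ∨ x = j
      · exact ⟨i, ⟨hi, by omega⟩, by simpa using hxij⟩
      · refine ⟨if x < j then x else x - 1, ⟨by split_ifs <;> omega, by split_ifs <;> omega⟩, ?_⟩
        split_ifs <;> omega
  · intro s _ t _ hst
    rw [min_gammaIJ hij, min_gammaIJ hij]
    have : (if s < j then s else s + 1) < (if t < j then t else t + 1) := by
      split_ifs <;> omega
    exact_mod_cast this

lemma mem_indSet {C : ℕ → Finset ℕ} {k t : ℕ} {S : Finset ℕ} :
    t ∈ indSet C k S ↔ (1 ≤ t ∧ t ≤ k) ∧ ∃ x ∈ C t, x ∈ S := by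
  simp [indSet, Finset.Nonempty]

lemma mem_indSet_gammaIJ_self_iff {p q k : ℕ} {S : Finset ℕ} (hp : 1 ≤ p) (hpk : p ≤ k) :
    p ∈ indSet (gammaIJ p q) k S ↔ p ∈ S ∨ q ∈ S := by
  simp [mem_indSet, mem_gammaIJ, hp, hpk]

/-- `dropAt q` relabels `ℕ \ {q}` onto `ℕ` preserving the order (for `q ≥ 1`): this is how
`γ_{p,q}` acts on the points outside its block `{p, q}`. -/
def dropAt (q x : ℕ) : ℕ := if x < q then x else x - 1

lemma dropAt_injOn (q : ℕ) : Set.InjOn (dropAt q) {x | x ≠ q} := by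
  intro x hx y hy hxy
  simp only [Set.mem_ofPred_eq, dropAt] at hx hy hxy
  split_ifs at hxy <;> omega

lemma image_dropAt_subset_vec {m q : ℕ} {S : Finset ℕ} (hq : 1 ≤ q) (hqm : q ≤ m + 1)
    (hS : S ⊆ vec (m + 1)) (hqS : q ∉ S) : S.image (dropAt q) ⊆ vec m := by
  intro y hy
  obtain ⟨x, hxS, rfl⟩ := Finset.mem_image.1 hy
  have hx := Finset.mem_Icc.1 (hS hxS)
  have hxq : x ≠ q := fun h => hqS (h ▸ hxS)
  simp only [vec, Finset.mem_Icc, dropAt]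
  split_ifs <;> omega

lemma one_mem_image_dropAt {q : ℕ} {S : Finset ℕ} (h1S : 1 ∈ S) (hq : 1 < q) :
    1 ∈ S.image (dropAt q) :=
  Finset.mem_image.2 ⟨1, h1S, if_pos hq⟩

lemma indSet_gammaIJ_eq_image {m p q : ℕ} {S : Finset ℕ} (hp : 1 ≤ p) (hpq : p < q)
    (hqm : q ≤ m + 1) (hS : S ⊆ vec (m + 1)) (hpS : p ∉ S) (hqS : q ∉ S) :
    indSet (gammaIJ p q) m S = S.image (dropAt q) := by
  ext t
  simp only [mem_indSet, Finset.mem_image, mem_gammaIJ, dropAt]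
  constructor
  · rintro ⟨ht, x, hxt, hxS⟩
    have hxp : x ≠ p := fun h => hpS (h ▸ hxS)
    have hxq : x ≠ q := fun h => hqS (h ▸ hxS)
    refine ⟨x, hxS, ?_⟩
    split_ifs at hxt ⊢ <;> omega
  · rintro ⟨x, hxS, rfl⟩
    have hx := Finset.mem_Icc.1 (hS hxS)
    have hxp : x ≠ p := fun h => hpS (h ▸ hxS)
    have hxq : x ≠ q := fun h => hqS (h ▸ hxS)
    refine ⟨⟨by split_ifs <;> omega, by split_ifs <;> omega⟩, x, ?_, hxS⟩
    split_ifs <;> omega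

lemma eq_of_indSet_gammaIJ_eq {m p q : ℕ} {S T : Finset ℕ} (hp : 1 ≤ p) (hpq : p < q)
    (hqm : q ≤ m + 1) (hS : S ⊆ vec (m + 1)) (hT : T ⊆ vec (m + 1)) (hpS : p ∉ S)
    (hqS : q ∉ S) (hST : indSet (gammaIJ p q) m T = indSet (gammaIJ p q) m S) : T = S := by
  have hpT : ¬(p ∈ T ∨ q ∈ T) := by
    rw [← mem_indSet_gammaIJ_self_iff hp (by omega : p ≤ m), hST,
      mem_indSet_gammaIJ_self_iff hp (by omega : p ≤ m)]
    tauto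
  push Not at hpT
  rw [indSet_gammaIJ_eq_image hp hpq hqm hS hpS hqS,
    indSet_gammaIJ_eq_image hp hpq hqm hT hpT.1 hpT.2] at hST
  have hoff : ∀ {U : Finset ℕ}, q ∉ U → (U : Set ℕ) ⊆ {x | x ≠ q} :=
    fun hqU x hx h => hqU (h ▸ hx)
  rw [← Finset.coe_inj, Finset.coe_image, Finset.coe_image] at hST
  exact Finset.coe_inj.1 (((dropAt_injOn q).image_eq_image_iff (hoff hpT.2) (hoff hqS)).1 hST)

/-- Stability lets us replace `π` by `γ_{p,q}`, and `γ_{p,q}` is injective on the sets avoiding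
its block. -/
lemma mem_of_indSet_gammaIJ_mem {m p q : ℕ} (hm : 2 ≤ m) {P : Set (Finset ℕ)}
    (hP : IsPattern (m + 1) P) (hst : IsStable (m + 1) (m + 1) P) {S : Finset ℕ}
    (hS : S ⊆ vec (m + 1)) (hp : 1 ≤ p) (hpq : p < q) (hqm : q ≤ m + 1) (hpS : p ∉ S)
    (hqS : q ∉ S) (hmem : indSet (gammaIJ p q) m S ∈ indPat (gammaIJ m (m + 1)) m P) :
    S ∈ P := by
  rw [hst m hm (by omega) _ _ (gammaIJ_isNOP (by omega) (by omega) le_rfl)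
    (gammaIJ_isNOP hp hpq hqm)] at hmem
  obtain ⟨T, hTP, hST⟩ := hmem
  rwa [← eq_of_indSet_gammaIJ_eq hp hpq hqm hS (hP.2 T hTP).2 hpS hqS hST]

lemma exists_lt_not_mem_of_card_lt {m : ℕ} {S : Finset ℕ} (hS : S ⊆ vec (m + 1))
    (hcard : S.card < m) : ∃ p q, 1 ≤ p ∧ p < q ∧ q ≤ m + 1 ∧ p ∉ S ∧ q ∉ S := by
  have hcompl : 1 < (vec (m + 1) \ S).card := by
    rw [Finset.card_sdiff_of_subset hS, vec, Nat.card_Icc]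
    omega
  obtain ⟨a, ha, b, hb, hab⟩ := Finset.one_lt_card.1 hcompl
  simp only [vec, Finset.mem_sdiff, Finset.mem_Icc] at ha hb
  rcases hab.lt_or_gt with hlt | hlt
  · exact ⟨a, b, ha.1.1, hlt, hb.1.2, ha.2, hb.2⟩
  · exact ⟨b, a, hb.1.1, hlt, ha.1.2, hb.2, ha.2⟩

lemma mem_of_forall_image_dropAt_mem {m : ℕ} {P : Set (Finset ℕ)} (hP : IsPattern (m + 1) P)
    (hst : IsStable (m + 1) (m + 1) P) {S : Finset ℕ} (hne : S.Nonempty)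
    (hS : S ⊆ vec (m + 1)) (hcard : S.card < m)
    (himage : ∀ q, 1 < q → q ≤ m + 1 → q ∉ S →
      S.image (dropAt q) ∈ indPat (gammaIJ m (m + 1)) m P) :
    S ∈ P := by
  have hm : 2 ≤ m := by have := hne.card_pos; omega
  obtain ⟨p, q, hp, hpq, hqm, hpS, hqS⟩ := exists_lt_not_mem_of_card_lt hS hcard
  refine mem_of_indSet_gammaIJ_mem hm hP hst hS hp hpq hqm hpS hqS ?_
  rw [indSet_gammaIJ_eq_image hp hpq hqm hS hpS hqS]
  exact himage q (by omega) hqm hqS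

theorem stmt2_general (m j : ℕ) (hjm : j < m)
    (P : Set (Finset ℕ)) (hP : IsPattern (m + 1) P) (hst : IsStable (m + 1) (m + 1) P) :
    (APat j m ⊆ indPat (gammaIJ m (m + 1)) m P → APat j (m + 1) ⊆ P) ∧
    (A1Pat j m ⊆ indPat (gammaIJ m (m + 1)) m P → A1Pat j (m + 1) ⊆ P) := by
  constructor
  · rintro hA S ⟨hne, hS, hcard⟩
    refine mem_of_forall_image_dropAt_mem hP hst hne hS (by omega) fun q hq hqm hqS => hA ?_
    exact ⟨hne.image _, image_dropAt_subset_vec hq.le hqm hS hqS, card_image_le.trans hcard⟩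
  · rintro hA S ⟨h1S, hS, hcard⟩
    refine mem_of_forall_image_dropAt_mem hP hst ⟨1, h1S⟩ hS (by omega) fun q hq hqm hqS => hA ?_
    exact ⟨one_mem_image_dropAt h1S hq, image_dropAt_subset_vec hq.le hqm hS hqS,
      card_image_le.trans hcard⟩

theorem stmt2 (m j : ℕ) (hj1 : 1 ≤ j) (hjm : j < m)
    (P : Set (Finset ℕ)) (hP : IsPattern (m + 1) P) (hst : IsStable (m + 1) (m + 1) P) :
    (APat j m ⊆ indPat (gammaIJ m (m + 1)) m P → APat j (m + 1) ⊆ P) ∧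
    (A1Pat j m ⊆ indPat (gammaIJ m (m + 1)) m P → A1Pat j (m + 1) ⊆ P) :=
  stmt2_general m j hjm P hP hst
end

section
/- For every m ≥ 2 and every 1 ≤ j ≤ m, the m-pattern A_{j,m} is m-stable; moreover, for every γ ∈ Π(m,m-1), (A_{j,m})_γ = A_{j,m-1} when j ≤ m-1, and (A_{m,m})_γ = A_{m-1,m-1}. -/
open Finset

/-! For any partition `γ` of `{1,…,m}` into `k` blocks, `(A_{j,m})_γ = A_{min j k, k}`, which does
not depend on `γ`. Each point of `P` lies in exactly one block, so `P_γ` is nonempty with at most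
`#P` elements; conversely a nonempty set `S` of at most `j` blocks is `P_γ` for `P` made of one
point from each block of `S`. -/

section Induced

variable {C : ℕ → Finset ℕ} {k : ℕ}

theorem indSet_subset_Icc (P : Finset ℕ) : indSet C k P ⊆ Icc 1 k :=
  filter_subset _ _

theorem indSet_nonempty {P : Finset ℕ} (hP : P.Nonempty) (hPC : P ⊆ (Icc 1 k).biUnion C) :
    (indSet C k P).Nonempty := by
  obtain ⟨p, hp⟩ := hP
  obtain ⟨i, hi, hpi⟩ := mem_biUnion.mp (hPC hp)
  exact ⟨i, mem_filter.mpr ⟨hi, p, mem_inter.mpr ⟨hpi, hp⟩⟩⟩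

theorem card_indSet_le (hC : (Icc 1 k : Set ℕ).PairwiseDisjoint C) (P : Finset ℕ) :
    #(indSet C k P) ≤ #P := by
  refine card_le_card_of_forall_subsingleton (fun i p => p ∈ C i) ?_ ?_
  · intro i hi
    obtain ⟨p, hp⟩ := (mem_filter.mp hi).2
    exact ⟨p, (mem_inter.mp hp).2, (mem_inter.mp hp).1⟩
  · rintro p - i ⟨hi, hpi⟩ i' ⟨hi', hpi'⟩
    by_contra hne
    exact disjoint_left.mp (hC (indSet_subset_Icc P hi) (indSet_subset_Icc P hi') hne) hpi hpi'

theorem indSet_image_of_mem (hC : (Icc 1 k : Set ℕ).PairwiseDisjoint C) {rep : ℕ → ℕ}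
    (hrep : ∀ i ∈ Icc 1 k, rep i ∈ C i) {S : Finset ℕ} (hS : S ⊆ Icc 1 k) :
    indSet C k (S.image rep) = S := by
  ext i
  simp only [indSet, mem_filter, Finset.Nonempty, mem_inter, mem_image]
  constructor
  · rintro ⟨hi, _, hq, i', hi', rfl⟩
    by_contra hii
    exact disjoint_left.mp (hC hi (hS hi') (ne_of_mem_of_not_mem hi' hii).symm)
      hq (hrep i' (hS hi'))
  · exact fun hiS => ⟨hS hiS, rep i, hrep i (hS hiS), i, hiS, rfl⟩

theorem indPat_APat {m j : ℕ} (hne : ∀ i ∈ Icc 1 k, (C i).Nonempty)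
    (hC : (Icc 1 k : Set ℕ).PairwiseDisjoint C) (hcover : (Icc 1 k).biUnion C = vec m) :
    indPat C k (APat j m) = APat (min j k) k := by
  ext S
  constructor
  · rintro ⟨P, ⟨hPne, hPm, hPj⟩, rfl⟩
    refine ⟨indSet_nonempty hPne (hcover ▸ hPm), indSet_subset_Icc P,
      le_min ((card_indSet_le hC P).trans hPj) ?_⟩
    simpa using card_le_card (indSet_subset_Icc (C := C) P)
  · rintro ⟨hSne, hSk, hSj⟩
    choose rep hrep using fun i =>
      if hi : i ∈ Icc 1 k then (hne i hi).imp fun _ hx (_ : i ∈ Icc 1 k) => hx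
      else ⟨0, fun h => absurd h hi⟩
    refine ⟨S.image rep, ⟨hSne.image rep, ?_, card_image_le.trans (hSj.trans (min_le_left _ _))⟩,
      indSet_image_of_mem hC hrep hSk⟩
    rw [← hcover, image_subset_iff]
    exact fun i hi => mem_biUnion.mpr ⟨i, hSk hi, hrep i (hSk hi)⟩

end Induced

theorem IsNOP.indPat_APat {m k : ℕ} {C : ℕ → Finset ℕ} (hC : IsNOP m k C) (j : ℕ) :
    indPat C k (APat j m) = APat (min j k) k :=
  _root_.indPat_APat hC.1 hC.2.1 hC.2.2.1

theorem stmt5_general (m j : ℕ) :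
    IsStable m m (APat j m) ∧
    ∀ γ : ℕ → Finset ℕ, IsNOP m (m - 1) γ →
      (j ≤ m - 1 → indPat γ (m - 1) (APat j m) = APat j (m - 1)) ∧
      indPat γ (m - 1) (APat m m) = APat (m - 1) (m - 1) := by
  refine ⟨fun k' _ _ α β hα hβ => by rw [hα.indPat_APat, hβ.indPat_APat], fun γ hγ => ⟨?_, ?_⟩⟩
  · intro hj
    rw [hγ.indPat_APat, min_eq_left hj]
  · rw [hγ.indPat_APat, min_eq_right (Nat.sub_le m 1)]

theorem stmt5 (m j : ℕ) (hm : 2 ≤ m) (hj1 : 1 ≤ j) (hjm : j ≤ m) :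
    IsStable m m (APat j m) ∧
    ∀ γ : ℕ → Finset ℕ, IsNOP m (m - 1) γ →
      (j ≤ m - 1 → indPat γ (m - 1) (APat j m) = APat j (m - 1)) ∧
      indPat γ (m - 1) (APat m m) = APat (m - 1) (m - 1) :=
  stmt5_general m j
end

section
/- For all integers r,s,m with 2 ≤ r < r+1 < s < m, the m-pattern D^m_{r,s} is m-stable and for every γ ∈ Π(m,m-1) one has (D^m_{r,s})_γ = D^{m-1}_{r-1,s-1}. -/
/-!
A partition `γ ∈ Π(m, k)` with `k < m` has a block containing two points `x < y`. Identifying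
`y` with `x` and renumbering the points above `y` (the map `collapse x y`) turns `γ` into a
partition of `{1, …, m - 1}` into `k` blocks, and since `collapse x y` only identifies points of
one block, the pattern induced by `γ` is the pattern induced by the collapsed partition on the
collapsed pattern.

A set `S` lies in `D^m_{r,s}` iff `S ⊆ m⃗` and either `1 ∈ S` and `|S| < m - r`, or `|S| ≥ m - r`
and `S ⊇ {1, …, s - (m - |S|)}`. In this form one checks that collapsing two points of `m⃗` sends
`D^m_{r,s}` onto `D^{m-1}_{r-1,s-1}` as long as `r ≥ 1` and `r + 2 ≤ s ≤ m`, while `D^m_{0,s}`, the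
collection of all subsets of `m⃗` containing `1`, is sent onto `D^{m-1}_{0,s'}`. Induction on
`m - k`, starting from the only element `({1}, …, {m})` of `Π(m, m)`, gives
`(D^m_{r,s})_γ = D^k_{r-(m-k), s-(m-k)}` for every `γ ∈ Π(m, k)`, which depends only on `k`.
-/

open Finset

lemma card_vec (m : ℕ) : #(vec m) = m := by
  simp [vec]

def collapse (x y z : ℕ) : ℕ := if z = y then x else if z < y then z else z - 1

def skip (y c : ℕ) : ℕ := if c < y then c else c + 1

section Collapse

variable {x y : ℕ}

lemma collapse_of_lt {z : ℕ} (h : z < y) : collapse x y z = z := by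
  simp [collapse, h.ne, h]

lemma collapse_self_right : collapse x y y = x := by
  simp [collapse]

lemma skip_of_lt {c : ℕ} (h : c < y) : skip y c = c := if_pos h

lemma skip_of_le {c : ℕ} (h : y ≤ c) : skip y c = c + 1 := if_neg (not_lt.2 h)

lemma skip_ne (c : ℕ) : skip y c ≠ y := by
  unfold skip; split_ifs <;> omega

lemma skip_injective : Function.Injective (skip y) := by
  intro a b h; unfold skip at h; split_ifs at h <;> omega

lemma collapse_skip (c : ℕ) : collapse x y (skip y c) = c := by
  unfold collapse skip; split_ifs <;> omega

lemma collapse_eq_collapse_iff (hxy : x < y) {z w : ℕ} :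
    collapse x y z = collapse x y w ↔ z = w ∨ (z = x ∧ w = y) ∨ (z = y ∧ w = x) := by
  unfold collapse; split_ifs <;> omega

lemma collapse_lt_collapse {z w : ℕ} (hz : z ≠ y) (hw : w ≠ y) (h : z < w) :
    collapse x y z < collapse x y w := by
  unfold collapse; split_ifs <;> omega

lemma collapse_mem_vec {n z : ℕ} (hx : 1 ≤ x) (hxy : x < y) (hyn : y ≤ n + 1)
    (hz : z ∈ vec (n + 1)) : collapse x y z ∈ vec n := by
  simp only [vec, mem_Icc] at *
  unfold collapse; split_ifs <;> omega

lemma skip_mem_vec {n c : ℕ} (hc : c ∈ vec n) : skip y c ∈ vec (n + 1) := by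
  simp only [vec, mem_Icc] at *
  unfold skip; split_ifs <;> omega

variable {S : Finset ℕ}

lemma image_collapse_subset_vec {n : ℕ} (hx : 1 ≤ x) (hxy : x < y) (hyn : y ≤ n + 1)
    (hS : S ⊆ vec (n + 1)) : S.image (collapse x y) ⊆ vec n :=
  image_subset_iff.2 fun _ hz => collapse_mem_vec hx hxy hyn (hS hz)

lemma image_skip_subset_vec {n : ℕ} (hS : S ⊆ vec n) :
    S.image (skip y) ⊆ vec (n + 1) :=
  image_subset_iff.2 fun _ hc => skip_mem_vec (hS hc)

lemma image_collapse_vec {n : ℕ} (hx : 1 ≤ x) (hxy : x < y) (hyn : y ≤ n + 1) :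
    (vec (n + 1)).image (collapse x y) = vec n :=
  (image_collapse_subset_vec hx hxy hyn subset_rfl).antisymm fun c hc =>
    mem_image.2 ⟨skip y c, skip_mem_vec hc, collapse_skip c⟩

lemma image_collapse_image_skip (S : Finset ℕ) : (S.image (skip y)).image (collapse x y) = S := by
  rw [image_image, show collapse x y ∘ skip y = id from funext collapse_skip, image_id]

lemma mem_image_collapse_of_lt {z : ℕ} (hz : z ∈ S) (hzy : z < y) :
    z ∈ S.image (collapse x y) :=
  mem_image.2 ⟨z, hz, collapse_of_lt hzy⟩

lemma mem_image_skip_of_lt {c : ℕ} (hc : c ∈ S) (hcy : c < y) : c ∈ S.image (skip y) :=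
  mem_image.2 ⟨c, hc, skip_of_lt hcy⟩

lemma card_image_collapse (hxy : x < y) (h : ¬(x ∈ S ∧ y ∈ S)) :
    #(S.image (collapse x y)) = #S :=
  card_image_of_injOn fun z hz w hw hzw => by
    rcases (collapse_eq_collapse_iff hxy).1 hzw with h' | ⟨rfl, rfl⟩ | ⟨rfl, rfl⟩
    · exact h'
    · exact (h ⟨hz, hw⟩).elim
    · exact (h ⟨hw, hz⟩).elim

lemma card_image_collapse_add_one (hxy : x < y) (hx : x ∈ S) (hy : y ∈ S) :
    #(S.image (collapse x y)) + 1 = #S := by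
  have hxS : collapse x y y ∈ (S.erase y).image (collapse x y) := by
    rw [collapse_self_right]
    exact mem_image.2 ⟨x, mem_erase.2 ⟨hxy.ne, hx⟩, collapse_of_lt hxy⟩
  conv_lhs => rw [← insert_erase hy, image_insert, insert_eq_of_mem hxS]
  rw [card_image_collapse (S := S.erase y) hxy fun h => notMem_erase y S h.2,
    card_erase_add_one hy]

end Collapse

section DPattern

variable {m r s : ℕ}

lemma DPat_subset_vec : ∀ P ∈ DPat m r s, P ⊆ vec m := by
  rintro P ((⟨-, hP, -⟩ | hP) | rfl)
  · exact hP
  · simp only [Set.mem_iUnion] at hP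
    obtain ⟨h, -, D, -, -, rfl⟩ := hP
    exact sdiff_subset
  · exact subset_rfl

lemma DPat_zero (hm : 1 ≤ m) : DPat m 0 s = {S | 1 ∈ S ∧ S ⊆ vec m} := by
  ext S
  simp only [DPat, A1Pat, Set.mem_union, Set.mem_iUnion, Set.mem_singleton_iff, exists_prop,
    mem_Icc]
  constructor
  · rintro ((⟨h1, hS, -⟩ | ⟨h, ⟨h1, h0⟩, -⟩) | rfl)
    · exact ⟨h1, hS⟩
    · omega
    · exact ⟨mem_Icc.2 ⟨le_rfl, hm⟩, subset_rfl⟩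
  · rintro ⟨h1, hS⟩
    by_cases hc : #S ≤ m - 0 - 1
    · exact Or.inl (Or.inl ⟨h1, hS, hc⟩)
    · exact Or.inr (eq_of_subset_of_card_le hS (by rw [card_vec]; omega))

lemma mem_DPat_iff (hsm : s ≤ m) {S : Finset ℕ} :
    S ∈ DPat m r s ↔
      S ⊆ vec m ∧ (1 ∈ S ∧ #S + r < m ∨ m ≤ #S + r ∧ Icc 1 (s + #S - m) ⊆ S) := by
  simp only [DPat, A1Pat, HPat, Set.mem_union, Set.mem_iUnion, Set.mem_singleton_iff,
    exists_prop, mem_Icc]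
  constructor
  · rintro ((⟨h1, hS, hcard⟩ | ⟨h, ⟨h1, hr⟩, D, rfl, hD, rfl⟩) | rfl)
    · exact ⟨hS, Or.inl ⟨h1, by have := card_pos.2 ⟨1, h1⟩; omega⟩⟩
    · have hDvec : D ⊆ vec m := hD.trans (Icc_subset_Icc (by omega) le_rfl)
      rw [card_sdiff_of_subset hDvec, card_vec]
      refine ⟨sdiff_subset, Or.inr ⟨by omega, fun i hi => ?_⟩⟩
      rw [mem_Icc] at hi
      refine mem_sdiff.2 ⟨mem_Icc.2 ⟨hi.1, by omega⟩, fun hiD => ?_⟩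
      have := mem_Icc.1 (hD hiD)
      omega
    · rw [card_vec]
      exact ⟨subset_rfl, Or.inr ⟨by omega, Icc_subset_Icc le_rfl (by omega)⟩⟩
  · rintro ⟨hS, ⟨h1, hcard⟩ | ⟨hcard, hinit⟩⟩
    · exact Or.inl (Or.inl ⟨h1, hS, by omega⟩)
    · have hSm : #S ≤ m := card_vec m ▸ card_le_card hS
      rcases hSm.lt_or_eq with hlt | heq
      · refine Or.inl (Or.inr ⟨m - #S, ⟨by omega, by omega⟩, vec m \ S,
          by rw [card_sdiff_of_subset hS, card_vec], fun d hd => ?_,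
          (Finset.sdiff_sdiff_eq_self hS).symm⟩)
        rw [mem_sdiff, vec, mem_Icc] at hd
        refine mem_Icc.2 ⟨?_, hd.1.2⟩
        by_contra hlt
        exact hd.2 (hinit (mem_Icc.2 ⟨hd.1.1, by omega⟩))
      · exact Or.inr (eq_of_subset_of_card_le hS (by rw [card_vec]; omega))

end DPattern

section CollapseDPattern

variable {n r s x y : ℕ}

lemma image_collapse_DPat_zero {s' : ℕ} (hn : 1 ≤ n) (hx : 1 ≤ x) (hxy : x < y)
    (hyn : y ≤ n + 1) : (fun S => S.image (collapse x y)) '' DPat (n + 1) 0 s = DPat n 0 s' := by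
  rw [DPat_zero (by omega), DPat_zero hn]
  ext Q
  constructor
  · rintro ⟨S, ⟨h1, hS⟩, rfl⟩
    exact ⟨mem_image_collapse_of_lt h1 (by omega), image_collapse_subset_vec hx hxy hyn hS⟩
  · rintro ⟨h1, hQ⟩
    exact ⟨Q.image (skip y), ⟨mem_image_skip_of_lt h1 (by omega), image_skip_subset_vec hQ⟩,
      image_collapse_image_skip Q⟩

lemma image_collapse_mem_DPat (hrs : r + 2 ≤ s) (hsn : s ≤ n) (hx : 1 ≤ x) (hxy : x < y)
    (hyn : y ≤ n + 1) {S : Finset ℕ} (hS : S ∈ DPat (n + 1) (r + 1) (s + 1)) :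
    S.image (collapse x y) ∈ DPat n r s := by
  rw [mem_DPat_iff (by omega)] at hS
  obtain ⟨hSvec, hS⟩ := hS
  rw [mem_DPat_iff hsn]
  refine ⟨image_collapse_subset_vec hx hxy hyn hSvec, ?_⟩
  rcases hS with ⟨h1, hcard⟩ | ⟨hcard, hinit⟩
  · have := card_image_le (s := S) (f := collapse x y)
    exact Or.inl ⟨mem_image_collapse_of_lt h1 (by omega), by omega⟩
  have hinit' : ∀ i, 1 ≤ i → i + n ≤ s + #S → i ∈ S := fun i h1 h2 =>
    hinit (mem_Icc.2 ⟨h1, by omega⟩)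
  by_cases hxyS : x ∈ S ∧ y ∈ S
  · have hc := card_image_collapse_add_one hxy hxyS.1 hxyS.2
    by_cases hQ : n ≤ #(S.image (collapse x y)) + r
    · refine Or.inr ⟨hQ, fun i hi => ?_⟩
      rw [mem_Icc] at hi
      have hskip : 1 ≤ skip y i ∧ skip y i ≤ i + 1 := by unfold skip; split_ifs <;> omega
      rw [← collapse_skip (x := x) (y := y) i]
      exact mem_image_of_mem _ (hinit' _ hskip.1 (by omega))
    · exact Or.inl ⟨mem_image_collapse_of_lt (hinit' 1 le_rfl (by omega)) (by omega), by omega⟩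
  · have hc := card_image_collapse hxy hxyS
    refine Or.inr ⟨by omega, fun i hi => ?_⟩
    rw [mem_Icc, hc] at hi
    have hiy : i < y := by
      by_contra hyi
      exact hxyS ⟨hinit' x hx (by omega), hinit' y (by omega) (by omega)⟩
    exact mem_image_collapse_of_lt (hinit' i hi.1 (by omega)) hiy

lemma exists_mem_DPat_image_collapse_eq (hrs : r + 2 ≤ s) (hsn : s ≤ n) (hx : 1 ≤ x)
    (hxy : x < y) (hyn : y ≤ n + 1) {Q : Finset ℕ} (hQ : Q ∈ DPat n r s) :
    ∃ S ∈ DPat (n + 1) (r + 1) (s + 1), S.image (collapse x y) = Q := by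
  rw [mem_DPat_iff hsn] at hQ
  obtain ⟨hQvec, hQ⟩ := hQ
  have hskip : Q.image (skip y) ⊆ vec (n + 1) := image_skip_subset_vec hQvec
  have hcard : #(Q.image (skip y)) = #Q := card_image_of_injective Q skip_injective
  simp only [mem_DPat_iff (show s + 1 ≤ n + 1 by omega)]
  rcases hQ with ⟨h1, hc⟩ | ⟨hc, hinit⟩
  · exact ⟨Q.image (skip y), ⟨hskip, Or.inl ⟨mem_image_skip_of_lt h1 (by omega), by omega⟩⟩,
      image_collapse_image_skip Q⟩
  have hinit' : ∀ i, 1 ≤ i → i + n ≤ s + #Q → i ∈ Q := fun i h1 h2 =>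
    hinit (mem_Icc.2 ⟨h1, by omega⟩)
  -- `y` has to be a point of `S` exactly when it lies in the initial segment `S` must contain
  by_cases hy : y + n ≤ s + #Q
  · have hyQ : y ∉ Q.image (skip y) := by simp [skip_ne]
    refine ⟨insert y (Q.image (skip y)), ⟨insert_subset (mem_Icc.2 ⟨by omega, hyn⟩) hskip,
      Or.inr ⟨by rw [card_insert_of_notMem hyQ]; omega, fun i hi => ?_⟩⟩, ?_⟩
    · rw [mem_Icc, card_insert_of_notMem hyQ, hcard] at hi
      rw [mem_insert]
      rcases lt_trichotomy i y with hiy | rfl | hyi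
      · exact Or.inr (mem_image_skip_of_lt (hinit' i hi.1 (by omega)) hiy)
      · exact Or.inl rfl
      · exact Or.inr (mem_image.2 ⟨i - 1, hinit' _ (by omega) (by omega),
          by rw [skip_of_le (by omega)]; omega⟩)
    · rw [image_insert, collapse_self_right, image_collapse_image_skip,
        insert_eq_of_mem (hinit' x hx (by omega))]
  · refine ⟨Q.image (skip y), ⟨hskip, Or.inr ⟨by omega, fun i hi => ?_⟩⟩,
      image_collapse_image_skip Q⟩
    rw [mem_Icc, hcard] at hi
    exact mem_image_skip_of_lt (hinit' i hi.1 (by omega)) (by omega)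

lemma image_collapse_DPat_succ (hrs : r + 2 ≤ s) (hsn : s ≤ n) (hx : 1 ≤ x) (hxy : x < y)
    (hyn : y ≤ n + 1) :
    (fun S => S.image (collapse x y)) '' DPat (n + 1) (r + 1) (s + 1) = DPat n r s := by
  refine (Set.image_subset_iff.2 fun S hS =>
    image_collapse_mem_DPat hrs hsn hx hxy hyn hS).antisymm fun Q hQ => ?_
  obtain ⟨S, hS, rfl⟩ := exists_mem_DPat_image_collapse_eq hrs hsn hx hxy hyn hQ
  exact ⟨S, hS, rfl⟩

lemma image_collapse_DPat (hrs : r = 0 ∨ r + 2 ≤ s) (hsn : s ≤ n + 1) (hn : 1 ≤ n)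
    (hx : 1 ≤ x) (hxy : x < y) (hyn : y ≤ n + 1) :
    (fun S => S.image (collapse x y)) '' DPat (n + 1) r s = DPat n (r - 1) (s - 1) := by
  rcases r with _ | r
  · exact image_collapse_DPat_zero hn hx hxy hyn
  obtain ⟨s, rfl⟩ : ∃ s', s = s' + 1 := ⟨s - 1, by omega⟩
  exact image_collapse_DPat_succ (by omega) (by omega) hx hxy hyn

end CollapseDPattern

lemma eqOn_id_of_strictMonoOn_Icc {n : ℕ} {c : ℕ → ℕ} (hc : StrictMonoOn c (Set.Icc 1 n))
    (hmaps : Set.MapsTo c (Set.Icc 1 n) (Set.Icc 1 n)) : Set.EqOn c id (Set.Icc 1 n) := by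
  have hle : ∀ t, 1 ≤ t → t ≤ n → t ≤ c t := by
    intro t ht1
    induction t, ht1 using Nat.le_induction with
    | base => exact fun hn => (hmaps ⟨le_rfl, hn⟩).1
    | succ t ht ih =>
      intro hn
      have := hc ⟨ht, by omega⟩ ⟨by omega, hn⟩ t.lt_add_one
      have := ih (by omega)
      omega
  have hge : ∀ d t, t + d = n → 1 ≤ t → c t ≤ t := by
    intro d
    induction d with
    | zero => exact fun t ht ht1 => (hmaps ⟨ht1, by omega⟩).2.trans_eq (by omega)
    | succ d ih =>
      intro t ht ht1
      have := hc ⟨ht1, by omega⟩ ⟨by omega, by omega⟩ t.lt_add_one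
      have := ih (t + 1) (by omega) (by omega)
      omega
  exact fun t ht => le_antisymm (hge (n - t) t (by have := ht.2; omega) ht.1) (hle t ht.1 ht.2)

lemma indPat_image {k : ℕ} {γ : ℕ → Finset ℕ} {f : ℕ → ℕ}
    (hf : ∀ t ∈ Icc 1 k, ∀ z ∈ γ t, ∀ w, f w = f z → w ∈ γ t) (𝒜 : Set (Finset ℕ)) :
    indPat (fun t => (γ t).image f) k ((fun P => P.image f) '' 𝒜) = indPat γ k 𝒜 := by
  unfold indPat
  rw [← Set.image_comp]
  refine Set.image_congr fun P _ => ?_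
  ext t
  simp only [Function.comp_apply, indSet, mem_filter, and_congr_right_iff]
  intro ht
  constructor
  · rintro ⟨_, hc⟩
    simp only [mem_inter, mem_image] at hc
    obtain ⟨⟨z, hz, rfl⟩, w, hw, hwz⟩ := hc
    exact ⟨w, mem_inter.2 ⟨hf t ht z hz w hwz, hw⟩⟩
  · rintro ⟨a, ha⟩
    rw [mem_inter] at ha
    exact ⟨f a, mem_inter.2 ⟨mem_image_of_mem f ha.1, mem_image_of_mem f ha.2⟩⟩

section BlockMin

variable {x y : ℕ} {B : Finset ℕ}

lemma min'_ne_of_lt (hxy : x < y) (hB : B.Nonempty) (hyx : y ∈ B → x ∈ B) : B.min' hB ≠ y := by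
  intro he
  have := B.min'_le x (hyx (he ▸ B.min'_mem hB))
  omega

lemma min_image_collapse (hxy : x < y) (hB : B.Nonempty) (hyx : y ∈ B → x ∈ B) :
    (B.image (collapse x y)).min = collapse x y (B.min' hB) := by
  have hmin : ∀ z ∈ B, z ≠ y → collapse x y (B.min' hB) ≤ collapse x y z := fun z hz hzy =>
    (B.min'_le z hz).eq_or_lt.elim (fun he => he ▸ le_rfl)
      fun hlt => (collapse_lt_collapse (min'_ne_of_lt hxy hB hyx) hzy hlt).le
  refine le_antisymm (min_le (mem_image_of_mem _ (B.min'_mem hB))) (Finset.le_min ?_)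
  simp only [mem_image, forall_exists_index, and_imp]
  rintro _ z hz rfl
  refine WithTop.coe_le_coe.2 ?_
  by_cases hzy : z = y
  · rw [hzy]
    exact (hmin x (hyx (hzy ▸ hz)) hxy.ne).trans_eq
      (by rw [collapse_of_lt hxy, collapse_self_right])
  · exact hmin z hz hzy

end BlockMin

namespace IsNOP

variable {m n k : ℕ} {γ : ℕ → Finset ℕ}

lemma subset_Icc_s7 (h : IsNOP m k γ) {t : ℕ} (ht : t ∈ Icc 1 k) : γ t ⊆ Icc 1 m :=
  h.2.2.1 ▸ subset_biUnion_of_mem γ ht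

lemma eq_of_mem_s7 (h : IsNOP m k γ) {i j a : ℕ} (hi : i ∈ Icc 1 k) (hj : j ∈ Icc 1 k)
    (hai : a ∈ γ i) (haj : a ∈ γ j) : i = j :=
  by_contra fun hij => disjoint_left.1 (h.2.1 i hi j hj hij) hai haj

lemma sum_card (h : IsNOP m k γ) : ∑ t ∈ Icc 1 k, #(γ t) = m := by
  rw [← card_biUnion fun i hi j hj hij => h.2.1 i hi j hj hij, h.2.2.1, Nat.card_Icc,
    Nat.add_sub_cancel]

lemma exists_lt_of_lt (h : IsNOP m k γ) (hkm : k < m) :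
    ∃ t ∈ Icc 1 k, ∃ x ∈ γ t, ∃ y ∈ γ t, x < y := by
  by_contra! hsmall
  have hcard : ∀ t ∈ Icc 1 k, #(γ t) ≤ 1 := fun t ht =>
    card_le_one.2 fun a ha b hb => le_antisymm (hsmall t ht b hb a ha) (hsmall t ht a ha b hb)
  have := sum_le_sum hcard
  simp only [h.sum_card, sum_const, Nat.card_Icc, smul_eq_mul, mul_one] at this
  omega

lemma eq_singleton_s7 (h : IsNOP n n γ) {t : ℕ} (ht : t ∈ Icc 1 n) : γ t = {t} := by
  have hpos : ∀ t ∈ Icc 1 n, 1 ≤ #(γ t) := fun t ht => card_pos.2 (h.1 t ht)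
  have hsum : ∑ t ∈ Icc 1 n, 1 = ∑ t ∈ Icc 1 n, #(γ t) := by simp [h.sum_card]
  choose! c hc using fun t ht => card_eq_one.1 ((sum_eq_sum_iff_of_le hpos).1 hsum t ht).symm
  have hmono : StrictMonoOn c (Set.Icc 1 n) := fun i hi j hj hij => by
    have := h.2.2.2 i (by simpa using hi) j (by simpa using hj) hij
    rwa [hc i (by simpa using hi), hc j (by simpa using hj), min_singleton, min_singleton,
      WithTop.coe_lt_coe] at this
  have hmaps : Set.MapsTo c (Set.Icc 1 n) (Set.Icc 1 n) := fun t ht => by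
    have ht' : t ∈ Icc 1 n := by simpa using ht
    simpa using h.subset_Icc_s7 ht' (hc t ht' ▸ mem_singleton_self (c t))
  rw [hc t ht, eqOn_id_of_strictMonoOn_Icc hmono hmaps (by simpa using ht), id]

lemma indPat_eq_self (h : IsNOP n n γ) {𝒜 : Set (Finset ℕ)} (h𝒜 : ∀ P ∈ 𝒜, P ⊆ vec n) :
    indPat γ n 𝒜 = 𝒜 := by
  have hP : ∀ P ∈ 𝒜, indSet γ n P = P := by
    intro P hP
    ext t
    simp only [indSet, mem_filter]
    constructor
    · rintro ⟨ht, a, ha⟩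
      rw [mem_inter, h.eq_singleton_s7 ht, mem_singleton] at ha
      exact ha.1 ▸ ha.2
    · intro htP
      have ht : t ∈ Icc 1 n := h𝒜 P hP htP
      exact ⟨ht, t, by rw [mem_inter, h.eq_singleton_s7 ht]; exact ⟨mem_singleton_self t, htP⟩⟩
  unfold indPat
  rw [Set.image_congr hP, Set.image_id']

variable {t₀ x y : ℕ}

lemma collapse_saturated (h : IsNOP m k γ) (ht₀ : t₀ ∈ Icc 1 k) (hx : x ∈ γ t₀) (hy : y ∈ γ t₀)
    (hxy : x < y) : ∀ t ∈ Icc 1 k, ∀ z ∈ γ t, ∀ w, collapse x y w = collapse x y z → w ∈ γ t := by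
  intro t ht z hz w hwz
  rcases (collapse_eq_collapse_iff hxy).1 hwz with rfl | ⟨rfl, rfl⟩ | ⟨rfl, rfl⟩
  · exact hz
  · exact h.eq_of_mem_s7 ht₀ ht hy hz ▸ hx
  · exact h.eq_of_mem_s7 ht₀ ht hx hz ▸ hy

lemma image_collapse (h : IsNOP (n + 1) k γ) (ht₀ : t₀ ∈ Icc 1 k) (hx : x ∈ γ t₀)
    (hy : y ∈ γ t₀) (hxy : x < y) : IsNOP n k (fun t => (γ t).image (collapse x y)) := by
  have hsat := h.collapse_saturated ht₀ hx hy hxy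
  have hyx : ∀ t ∈ Icc 1 k, y ∈ γ t → x ∈ γ t := fun t ht hyt =>
    hsat t ht y hyt x (by rw [collapse_self_right, collapse_of_lt hxy])
  have hx1 : 1 ≤ x := (mem_Icc.1 (h.subset_Icc_s7 ht₀ hx)).1
  have hyn : y ≤ n + 1 := (mem_Icc.1 (h.subset_Icc_s7 ht₀ hy)).2
  refine ⟨fun t ht => (h.1 t ht).image _, fun i hi j hj hij => ?_, ?_, fun i hi j hj hij => ?_⟩
  · rw [disjoint_left]
    rintro _ hzi hwj
    obtain ⟨z, hz, rfl⟩ := mem_image.1 hzi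
    obtain ⟨w, hw, hwz⟩ := mem_image.1 hwj
    exact disjoint_left.1 (h.2.1 i hi j hj hij) (hsat i hi z hz w hwz) hw
  · rw [← biUnion_image, h.2.2.1]
    exact image_collapse_vec hx1 hxy hyn
  · have hlt := h.2.2.2 i hi j hj hij
    rw [← coe_min' (h.1 i hi), ← coe_min' (h.1 j hj), WithTop.coe_lt_coe] at hlt
    rw [min_image_collapse hxy (h.1 i hi) (hyx i hi), min_image_collapse hxy (h.1 j hj) (hyx j hj)]
    exact WithTop.coe_lt_coe.2 <|
      collapse_lt_collapse (min'_ne_of_lt hxy _ (hyx i hi)) (min'_ne_of_lt hxy _ (hyx j hj)) hlt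

end IsNOP

theorem indPat_DPat {k : ℕ} (hk : 1 ≤ k) {m : ℕ} (hkm : k ≤ m) {r s : ℕ} {γ : ℕ → Finset ℕ}
    (hrs : r = 0 ∨ r + 2 ≤ s) (hsm : s ≤ m) (hγ : IsNOP m k γ) :
    indPat γ k (DPat m r s) = DPat k (r - (m - k)) (s - (m - k)) := by
  induction m, hkm using Nat.le_induction generalizing r s γ with
  | base =>
    rw [Nat.sub_self, Nat.sub_zero, Nat.sub_zero]
    exact hγ.indPat_eq_self DPat_subset_vec
  | succ n hkn ih =>
    obtain ⟨t₀, ht₀, x, hx, y, hy, hxy⟩ := hγ.exists_lt_of_lt (by omega)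
    have hx1 : 1 ≤ x := (mem_Icc.1 (hγ.subset_Icc_s7 ht₀ hx)).1
    have hyn : y ≤ n + 1 := (mem_Icc.1 (hγ.subset_Icc_s7 ht₀ hy)).2
    rw [← indPat_image (hγ.collapse_saturated ht₀ hx hy hxy),
      image_collapse_DPat hrs hsm (by omega) hx1 hxy hyn,
      ih (by omega) (by omega) (hγ.image_collapse ht₀ hx hy hxy)]
    congr 1 <;> omega

theorem stmt7_general (m r s : ℕ) (hrs : r + 1 < s) (hsm : s < m) :
    IsStable m m (DPat m r s) ∧
    ∀ γ : ℕ → Finset ℕ, IsNOP m (m - 1) γ →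
      indPat γ (m - 1) (DPat m r s) = DPat (m - 1) (r - 1) (s - 1) := by
  have key : ∀ k γ, 1 ≤ k → k ≤ m → IsNOP m k γ →
      indPat γ k (DPat m r s) = DPat k (r - (m - k)) (s - (m - k)) :=
    fun k γ hk hkm hγ => indPat_DPat hk hkm (Or.inr (by omega)) hsm.le hγ
  refine ⟨fun k hk hkm α β hα hβ => ?_, fun γ hγ => ?_⟩
  · rw [key k α (by omega) hkm hα, key k β (by omega) hkm hβ]
  · rw [key (m - 1) γ (by omega) (by omega) hγ]
    congr 1 <;> omega

theorem stmt7 (m r s : ℕ) (hr : 2 ≤ r) (hrs : r + 1 < s) (hsm : s < m) :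
    IsStable m m (DPat m r s) ∧
    ∀ γ : ℕ → Finset ℕ, IsNOP m (m - 1) γ →
      indPat γ (m - 1) (DPat m r s) = DPat (m - 1) (r - 1) (s - 1) :=
  stmt7_general m r s hrs hsm
end

section
/- Let m ≥ 3 and γ ∈ Π(m,m-1). Then: (a) (A¹_{m-2,m} ∪ 𝒩 ∪ {m⃗})_γ = A¹_{m-1,m-1} for every 𝒩 ⊆ H^m_{1,2}; (b) (A_{m-2,m} ∪ 𝒩 ∪ {m⃗})_γ = A_{m-1,m-1} for every 𝒩 ⊆ H^m_{1,1}; (c) (A_{m-2,m} ∪ 𝒩)_γ = A_{m-1,m-1} for every 𝒩 ⊆ H^m_{1,1} with |𝒩| = m-1. -/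
open Finset

/-!
Write `k = m - 1`. A set `S ⊆ {1,…,k}` is induced by the set of minima of the blocks it indexes,
which has the size of `S` and contains `1` when `S` does; so the sets of size at most `m - 2` in
the pattern induce every target set except `{1,…,k}` itself. That one is induced by `m⃗`, and in (c)
by a complement `m⃗ \ {d}` whose hole `d` lies in a block with at least two points: such a block
exists because `k < m`, and `m - 1` holes among `m` points cannot all avoid it.
-/

theorem indSet_eq_Icc {C : ℕ → Finset ℕ} {k : ℕ} {P : Finset ℕ}
    (hP : ∀ j ∈ Icc 1 k, ∃ x ∈ C j, x ∈ P) : indSet C k P = Icc 1 k :=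
  filter_true_of_mem fun j hj => by
    obtain ⟨x, hxj, hxP⟩ := hP j hj
    exact ⟨x, mem_inter.2 ⟨hxj, hxP⟩⟩

namespace IsNOP

variable {s k : ℕ} {γ : ℕ → Finset ℕ}

theorem subset_vec (hγ : IsNOP s k γ) {j : ℕ} (hj : j ∈ Icc 1 k) : γ j ⊆ vec s := by
  rw [vec, ← hγ.2.2.1]
  exact subset_biUnion_of_mem γ hj

theorem exists_mem_of_mem_vec (hγ : IsNOP s k γ) {x : ℕ} (hx : x ∈ vec s) :
    ∃ j ∈ Icc 1 k, x ∈ γ j := by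
  rwa [vec, ← hγ.2.2.1, mem_biUnion] at hx

theorem one_mem (hγ : IsNOP s k γ) (hk : 1 ≤ k) : 1 ∈ γ 1 := by
  have h1k : 1 ∈ Icc 1 k := mem_Icc.2 ⟨le_rfl, hk⟩
  obtain ⟨x, hx⟩ := hγ.1 1 h1k
  have hxs := mem_Icc.1 (hγ.subset_vec h1k hx)
  have h1s : 1 ∈ vec s := mem_Icc.2 ⟨le_rfl, by omega⟩
  obtain ⟨j, hj, h1j⟩ := hγ.exists_mem_of_mem_vec h1s
  obtain rfl | hj1 := eq_or_ne j 1
  · exact h1j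
  · have hlt := hγ.2.2.2 1 h1k j hj (by grind)
    have hmin_j : (γ j).min ≤ (1 : ℕ) := min_le h1j
    have hmin_1 : ((1 : ℕ) : WithTop ℕ) ≤ (γ 1).min :=
      Finset.le_min fun a ha => WithTop.coe_le_coe.2 (mem_Icc.1 (hγ.subset_vec h1k ha)).1
    exact absurd (hmin_1.trans_lt (hlt.trans_le hmin_j)) (lt_irrefl _)

theorem indSet_nonempty (hγ : IsNOP s k γ) {P : Finset ℕ} (hne : P.Nonempty)
    (hP : P ⊆ vec s) : (indSet γ k P).Nonempty := by
  obtain ⟨x, hx⟩ := hne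
  obtain ⟨j, hj, hxj⟩ := hγ.exists_mem_of_mem_vec (hP hx)
  exact ⟨j, mem_filter.2 ⟨hj, x, mem_inter.2 ⟨hxj, hx⟩⟩⟩

theorem one_mem_indSet (hγ : IsNOP s k γ) (hk : 1 ≤ k) {P : Finset ℕ} (hP : 1 ∈ P) :
    1 ∈ indSet γ k P :=
  mem_filter.2 ⟨mem_Icc.2 ⟨le_rfl, hk⟩, 1, mem_inter.2 ⟨hγ.one_mem hk, hP⟩⟩

theorem indSet_vec (hγ : IsNOP s k γ) : indSet γ k (vec s) = Icc 1 k :=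
  indSet_eq_Icc fun j hj => by
    obtain ⟨x, hx⟩ := hγ.1 j hj
    exact ⟨x, hx, hγ.subset_vec hj hx⟩

theorem indSet_vec_sdiff_singleton (hγ : IsNOP s k γ) {j d : ℕ} (hj : j ∈ Icc 1 k)
    (hd : d ∈ γ j) (hcard : 1 < (γ j).card) : indSet γ k (vec s \ {d}) = Icc 1 k := by
  refine indSet_eq_Icc fun i hi => ?_
  obtain ⟨x, hxi, hxd⟩ : ∃ x ∈ γ i, x ≠ d := by
    obtain rfl | hij := eq_or_ne i j
    · exact exists_mem_ne hcard d
    · obtain ⟨x, hx⟩ := hγ.1 i hi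
      exact ⟨x, hx, fun hxd => disjoint_left.1 (hγ.2.1 i hi j hj hij) hx (hxd ▸ hd)⟩
  exact ⟨x, hxi, mem_sdiff.2 ⟨hγ.subset_vec hi hxi, by simpa using hxd⟩⟩

theorem exists_indSet_eq (hγ : IsNOP s k γ) {S : Finset ℕ} (hS : S ⊆ Icc 1 k) :
    ∃ P ⊆ vec s, P.card = S.card ∧ (1 ∈ S → 1 ∈ P) ∧ indSet γ k P = S := by
  let f : ℕ → ℕ := fun j => if h : (γ j).Nonempty then (γ j).min' h else 0
  have hf : ∀ j ∈ Icc 1 k, f j ∈ γ j := fun j hj => by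
    simp only [f, dif_pos (hγ.1 j hj)]
    exact min'_mem _ _
  have hf_eq : ∀ i ∈ Icc 1 k, ∀ j ∈ Icc 1 k, f j ∈ γ i → i = j := fun i hi j hj hfi => by
    by_contra hij
    exact disjoint_left.1 (hγ.2.1 i hi j hj hij) hfi (hf j hj)
  refine ⟨S.image f, ?_, card_image_of_injOn ?_, fun h1S => ?_, ?_⟩
  · rintro _ hx
    obtain ⟨j, hj, rfl⟩ := mem_image.1 hx
    exact hγ.subset_vec (hS hj) (hf j (hS hj))
  · exact fun i hi j hj hij => hf_eq i (hS hi) j (hS hj) (hij ▸ hf i (hS hi))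
  · have h1k := hS h1S
    have hf1 : f 1 = 1 := by
      simp only [f, dif_pos (hγ.1 1 h1k)]
      refine le_antisymm (min'_le _ _ (hγ.one_mem (mem_Icc.1 h1k).2)) ?_
      exact le_min' _ _ _ fun y hy => (mem_Icc.1 (hγ.subset_vec h1k hy)).1
    exact mem_image.2 ⟨1, h1S, hf1⟩
  · ext i
    simp only [indSet, mem_filter]
    constructor
    · rintro ⟨hi, x, hx⟩
      obtain ⟨hxi, j, hj, rfl⟩ := mem_inter.1 hx |>.imp_right mem_image.1
      rwa [hf_eq i hi j (hS hj) hxi]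
    · exact fun hi => ⟨hS hi, f i, mem_inter.2 ⟨hf i (hS hi), mem_image.2 ⟨i, hi, rfl⟩⟩⟩

theorem exists_one_lt_card (hγ : IsNOP s k γ) (hks : k < s) :
    ∃ j ∈ Icc 1 k, 1 < (γ j).card := by
  by_contra! h
  have hcover := card_biUnion_le (s := Icc 1 k) (t := γ)
  have hsum := sum_le_card_nsmul (Icc 1 k) (fun j => (γ j).card) 1 h
  rw [hγ.2.2.1] at hcover
  simp only [Nat.card_Icc, smul_eq_mul, mul_one] at hcover hsum
  omega

end IsNOP

theorem mem_HPat_one_iff {m l : ℕ} {P : Finset ℕ} :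
    P ∈ HPat m 1 l ↔ ∃ d ∈ Icc l m, P = vec m \ {d} := by
  constructor
  · rintro ⟨D, hD, hDl, rfl⟩
    obtain ⟨d, rfl⟩ := card_eq_one.1 hD
    exact ⟨d, hDl (mem_singleton_self d), rfl⟩
  · rintro ⟨d, hd, rfl⟩
    exact ⟨{d}, card_singleton d, singleton_subset_iff.2 hd, rfl⟩

theorem subset_vec_of_mem_HPat {m h l : ℕ} {P : Finset ℕ} (hP : P ∈ HPat m h l) : P ⊆ vec m := by
  obtain ⟨D, -, -, rfl⟩ := hP
  exact sdiff_subset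

theorem nonempty_of_mem_HPat {m h l : ℕ} {P : Finset ℕ} (hP : P ∈ HPat m h l) (hhm : h < m) :
    P.Nonempty := by
  obtain ⟨D, hD, -, rfl⟩ := hP
  have := card_le_card_sdiff_add_card (s := vec m) (t := D)
  rw [vec, Nat.card_Icc, Nat.add_sub_cancel] at this
  exact card_pos.1 (by omega : 0 < (Icc 1 m \ D).card)

theorem one_mem_of_mem_HPat {m h : ℕ} {P : Finset ℕ} (hP : P ∈ HPat m h 2) (hm : 1 ≤ m) :
    1 ∈ P := by
  obtain ⟨D, -, hD, rfl⟩ := hP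
  exact mem_sdiff.2 ⟨mem_Icc.2 ⟨le_rfl, hm⟩, fun h1 => by simpa using hD h1⟩

theorem exists_vec_sdiff_singleton_mem {m : ℕ} {N : Set (Finset ℕ)} (hN : N ⊆ HPat m 1 1)
    {D : Finset ℕ} (hD : D ⊆ vec m) (hcard : m < N.ncard + D.card) :
    ∃ d ∈ D, vec m \ {d} ∈ N := by
  by_contra! h
  have hsub : N ⊆ (fun d => vec m \ {d}) '' ↑(vec m \ D) := by
    intro P hP
    obtain ⟨d, hd, rfl⟩ := mem_HPat_one_iff.1 (hN hP)
    exact ⟨d, mem_sdiff.2 ⟨hd, fun hdD => h d hdD hP⟩, rfl⟩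
  have hle : N.ncard ≤ (vec m \ D).card :=
    (Set.ncard_le_ncard hsub ((finite_toSet _).image _)).trans
      ((Set.ncard_image_le (finite_toSet _)).trans (Set.ncard_coe_finset _).le)
  have hDm := card_le_card hD
  rw [card_sdiff_of_subset hD] at hle
  simp only [vec, Nat.card_Icc, Nat.add_sub_cancel] at hle hDm
  omega

section Collapse

variable {m : ℕ} {γ : ℕ → Finset ℕ} {F : Set (Finset ℕ)}

theorem card_le_sub_two_or_eq_Icc {S : Finset ℕ} (hS : S ⊆ Icc 1 (m - 1)) :
    S.card ≤ m - 2 ∨ S = Icc 1 (m - 1) := by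
  by_contra! h
  exact h.2 (eq_of_subset_of_card_le hS (by simp; omega))

theorem indPat_eq_A1Pat (hm : 2 ≤ m) (hγ : IsNOP m (m - 1) γ) (hA : A1Pat (m - 2) m ⊆ F)
    (h1 : ∀ P ∈ F, 1 ∈ P) (hfull : ∃ P ∈ F, indSet γ (m - 1) P = Icc 1 (m - 1)) :
    indPat γ (m - 1) F = A1Pat (m - 1) (m - 1) := by
  refine Set.Subset.antisymm ?_ fun S ⟨h1S, hS, _⟩ => ?_
  · rintro _ ⟨P, hP, rfl⟩
    exact ⟨hγ.one_mem_indSet (by omega) (h1 P hP), filter_subset _ _,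
      (card_le_card (filter_subset _ _)).trans (by simp)⟩
  · obtain hsmall | rfl := card_le_sub_two_or_eq_Icc hS
    · obtain ⟨P, hPm, hPS, hP1, hPind⟩ := hγ.exists_indSet_eq hS
      exact ⟨P, hA ⟨hP1 h1S, hPm, hPS ▸ hsmall⟩, hPind⟩
    · exact hfull

theorem indPat_eq_APat (hγ : IsNOP m (m - 1) γ) (hA : APat (m - 2) m ⊆ F)
    (hP : ∀ P ∈ F, P.Nonempty ∧ P ⊆ vec m)
    (hfull : ∃ P ∈ F, indSet γ (m - 1) P = Icc 1 (m - 1)) :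
    indPat γ (m - 1) F = APat (m - 1) (m - 1) := by
  refine Set.Subset.antisymm ?_ fun S ⟨hSne, hS, _⟩ => ?_
  · rintro _ ⟨P, hPF, rfl⟩
    exact ⟨hγ.indSet_nonempty (hP P hPF).1 (hP P hPF).2, filter_subset _ _,
      (card_le_card (filter_subset _ _)).trans (by simp)⟩
  · obtain hsmall | rfl := card_le_sub_two_or_eq_Icc hS
    · obtain ⟨P, hPm, hPS, -, hPind⟩ := hγ.exists_indSet_eq hS
      exact ⟨P, hA ⟨card_pos.1 (hPS ▸ hSne.card_pos), hPm, hPS ▸ hsmall⟩, hPind⟩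
    · exact hfull

end Collapse

theorem stmt8 (m : ℕ) (hm : 3 ≤ m) (γ : ℕ → Finset ℕ) (hγ : IsNOP m (m - 1) γ) :
    (∀ N : Set (Finset ℕ), N ⊆ HPat m 1 2 →
      indPat γ (m - 1) (A1Pat (m - 2) m ∪ N ∪ {vec m}) = A1Pat (m - 1) (m - 1)) ∧
    (∀ N : Set (Finset ℕ), N ⊆ HPat m 1 1 →
      indPat γ (m - 1) (APat (m - 2) m ∪ N ∪ {vec m}) = APat (m - 1) (m - 1)) ∧
    (∀ N : Set (Finset ℕ), N ⊆ HPat m 1 1 → N.ncard = m - 1 →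
      indPat γ (m - 1) (APat (m - 2) m ∪ N) = APat (m - 1) (m - 1)) := by
  have hvec : vec m ≠ ∅ := (nonempty_Icc.2 (by omega)).ne_empty
  refine ⟨fun N hN => ?_, fun N hN => ?_, fun N hN hcard => ?_⟩
  · refine indPat_eq_A1Pat (by omega) hγ (fun P hP => .inl (.inl hP)) ?_
      ⟨vec m, .inr rfl, hγ.indSet_vec⟩
    rintro P ((hP | hP) | rfl)
    · exact hP.1
    · exact one_mem_of_mem_HPat (hN hP) (by omega)
    · exact mem_Icc.2 ⟨le_rfl, by omega⟩
  · refine indPat_eq_APat hγ (fun P hP => .inl (.inl hP)) ?_ ⟨vec m, .inr rfl, hγ.indSet_vec⟩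
    rintro P ((hP | hP) | rfl)
    · exact ⟨hP.1, hP.2.1⟩
    · exact ⟨nonempty_of_mem_HPat (hN hP) (by omega), subset_vec_of_mem_HPat (hN hP)⟩
    · exact ⟨nonempty_iff_ne_empty.2 hvec, subset_rfl⟩
  · obtain ⟨j, hj, hfat⟩ := hγ.exists_one_lt_card (by omega)
    obtain ⟨d, hdj, hdN⟩ := exists_vec_sdiff_singleton_mem hN (hγ.subset_vec hj) (by omega)
    refine indPat_eq_APat hγ (fun P hP => .inl hP) ?_
      ⟨_, .inr hdN, hγ.indSet_vec_sdiff_singleton hj hdj hfat⟩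
    rintro P (hP | hP)
    · exact ⟨hP.1, hP.2.1⟩
    · exact ⟨nonempty_of_mem_HPat (hN hP) (by omega), subset_vec_of_mem_HPat (hN hP)⟩
end

section
/- For all integers r,s,m with 2 ≤ r < r+1 < s < m, the pattern D^m_{r,s} equals the union of A¹_{m-r-1,m} with the collection of all sets of the form {1,…,l} ∪ S, where 1 ≤ l ≤ m and S ⊆ m⃗ is a set of cardinality at most m-s. -/
open Finset

/-! Write `F ⊆ m⃗` as `m⃗ \ D` with `h = #D` holes. Then `F ∈ H^m_{h,s-h+1}` says exactly that
`{1, …, s-h} ⊆ F`, while `F = {1, …, l} ∪ S` with `#S ≤ m-s` says that `{1, …, l} ⊆ F` for some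
`l ≥ s-h`. So both sides sort `F` by its number of holes: `h = 0` gives `m⃗`, `1 ≤ h ≤ r` gives
`H^m_{h,s-h+1}`, and `h > r` forces `#F ≤ m-r-1`, i.e. `F ∈ A¹_{m-r-1,m}`. -/

def IccUnionPat (m k : ℕ) : Set (Finset ℕ) :=
  { F | ∃ (l : ℕ) (S : Finset ℕ), 1 ≤ l ∧ l ≤ m ∧ S ⊆ vec m ∧ S.card ≤ k ∧ F = Icc 1 l ∪ S }

lemma card_vec_sdiff {m : ℕ} {F : Finset ℕ} (hF : F ⊆ vec m) :
    (vec m \ F).card = m - F.card := by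
  rw [card_sdiff_of_subset hF, vec, Nat.card_Icc, Nat.add_sub_cancel]

lemma card_le_of_subset_vec {m : ℕ} {F : Finset ℕ} (hF : F ⊆ vec m) : F.card ≤ m := by
  simpa [vec] using card_le_card hF

lemma mem_HPat_succ_iff {m h l : ℕ} {F : Finset ℕ} (hl : l ≤ m) :
    F ∈ HPat m h (l + 1) ↔ F ⊆ vec m ∧ Icc 1 l ⊆ F ∧ (vec m \ F).card = h := by
  constructor
  · rintro ⟨D, rfl, hD, rfl⟩
    have hDm : D ⊆ vec m := hD.trans (Icc_subset_Icc (by omega) le_rfl)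
    refine ⟨sdiff_subset, fun x hx => ?_, by rw [Finset.sdiff_sdiff_eq_self hDm]⟩
    rw [mem_Icc] at hx
    refine mem_sdiff.2 ⟨mem_Icc.2 ⟨hx.1, by omega⟩, fun hxD => ?_⟩
    have := mem_Icc.1 (hD hxD)
    omega
  · rintro ⟨hF, hlF, rfl⟩
    refine ⟨vec m \ F, rfl, fun x hx => ?_, (Finset.sdiff_sdiff_eq_self hF).symm⟩
    obtain ⟨hxm, hxF⟩ := mem_sdiff.1 hx
    rw [vec, mem_Icc] at hxm
    have : ¬ x ≤ l := fun hxl => hxF (hlF (mem_Icc.2 ⟨hxm.1, hxl⟩))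
    exact mem_Icc.2 ⟨by omega, hxm.2⟩

lemma mem_IccUnionPat_iff {m k : ℕ} {F : Finset ℕ} :
    F ∈ IccUnionPat m k ↔
      F ⊆ vec m ∧ ∃ l, 1 ≤ l ∧ l ≤ m ∧ Icc 1 l ⊆ F ∧ F.card ≤ l + k := by
  constructor
  · rintro ⟨l, S, hl1, hlm, hS, hSk, rfl⟩
    refine ⟨union_subset (Icc_subset_Icc le_rfl hlm) hS, l, hl1, hlm, subset_union_left, ?_⟩
    calc (Icc 1 l ∪ S).card ≤ (Icc 1 l).card + S.card := card_union_le _ _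
      _ ≤ l + k := by rw [Nat.card_Icc]; omega
  · rintro ⟨hF, l, hl1, hlm, hlF, hcard⟩
    refine ⟨l, F \ Icc 1 l, hl1, hlm, sdiff_subset.trans hF, ?_, (union_sdiff_of_subset hlF).symm⟩
    rw [card_sdiff_of_subset hlF, Nat.card_Icc]
    omega

lemma vec_mem_IccUnionPat {m : ℕ} (k : ℕ) (hm : 1 ≤ m) : vec m ∈ IccUnionPat m k :=
  mem_IccUnionPat_iff.2 ⟨subset_rfl, m, hm, le_rfl, subset_rfl, by simp [vec]⟩

lemma HPat_subset_IccUnionPat {m h s : ℕ} (hhs : h < s) (hsm : s ≤ m) :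
    HPat m h (s - h + 1) ⊆ IccUnionPat m (m - s) := by
  intro F hF
  obtain ⟨hFm, hlF, hcard⟩ := (mem_HPat_succ_iff (by omega)).1 hF
  rw [card_vec_sdiff hFm] at hcard
  have := card_le_of_subset_vec hFm
  exact mem_IccUnionPat_iff.2 ⟨hFm, s - h, by omega, by omega, hlF, by omega⟩

lemma IccUnionPat_subset_DPat {m r s : ℕ} (hsm : s ≤ m) :
    IccUnionPat m (m - s) ⊆ DPat m r s := by
  intro F hF
  obtain ⟨hFm, l, hl1, hlm, hlF, hcard⟩ := mem_IccUnionPat_iff.1 hF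
  have hholes := card_vec_sdiff hFm
  have := card_le_of_subset_vec hFm
  obtain hzero | hpos := Nat.eq_zero_or_pos (vec m \ F).card
  · refine Or.inr (Subset.antisymm hFm ?_)
    exact sdiff_eq_empty_iff_subset.1 (card_eq_zero.1 hzero)
  obtain hle | hlt := le_or_gt (vec m \ F).card r
  · refine Or.inl (Or.inr (Set.mem_iUnion₂.2 ⟨_, mem_Icc.2 ⟨hpos, hle⟩, ?_⟩))
    exact (mem_HPat_succ_iff (by omega)).2 ⟨hFm, (Icc_subset_Icc_right (by omega)).trans hlF, rfl⟩
  · exact Or.inl (Or.inl ⟨hlF (mem_Icc.2 ⟨le_rfl, hl1⟩), hFm, by omega⟩)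

theorem stmt12_general (m r s : ℕ) (hrs : r + 1 < s) (hsm : s < m) :
    DPat m r s = A1Pat (m - r - 1) m ∪
      { F : Finset ℕ | ∃ (l : ℕ) (S : Finset ℕ), 1 ≤ l ∧ l ≤ m ∧ S ⊆ vec m ∧
        S.card ≤ m - s ∧ F = Finset.Icc 1 l ∪ S } := by
  refine Set.Subset.antisymm ?_ (Set.union_subset ?_ (IccUnionPat_subset_DPat hsm.le))
  · rintro F ((hA | hH) | rfl)
    · exact Or.inl hA
    · obtain ⟨h, hh, hF⟩ := Set.mem_iUnion₂.1 hH
      exact Or.inr (HPat_subset_IccUnionPat (by rw [mem_Icc] at hh; omega) hsm.le hF)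
    · exact Or.inr (vec_mem_IccUnionPat _ (by omega))
  · exact Set.subset_union_left.trans Set.subset_union_left

theorem stmt12 (m r s : ℕ) (hr : 2 ≤ r) (hrs : r + 1 < s) (hsm : s < m) :
    DPat m r s = A1Pat (m - r - 1) m ∪
      { F : Finset ℕ | ∃ (l : ℕ) (S : Finset ℕ), 1 ≤ l ∧ l ≤ m ∧ S ⊆ vec m ∧
        S.card ≤ m - s ∧ F = Finset.Icc 1 l ∪ S } :=
  stmt12_general m r s hrs hsm
end
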